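/- Let g : [0, S] → ℝ be C¹ with −B ≤ g(s) ≤ −B/2 for all s (where B > 0), and |g'(s)| ≤ B. Then there is a constant C(B, S), depending only on B and S, such that for all x > 0, | ∫₀^S sin(xs)/(s·g(s)) ds | ≤ C(B, S). -/

import Mathlib

/-!
Split `1 / g s = 1 / g 0 + (1 / g s - 1 / g 0)`. After the substitution `t = x s` the first
part is `(1 / g 0) ∫₀^{xS} sinc`, and the sine integral `∫₀^T sinc` is bounded uniformly in
`T`: trivially on `[0, 1]`, and on `[1, T]` by integrating by parts against `-cos`. For the second
part the mean value theorem gives `|1 / g s - 1 / g 0| ≤ (4 / B) s`, which cancels the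
singularity of `sin (x s) / s`, so that part is bounded by `(4 / B) S` whatever `x` is.
-/

open intervalIntegral

open Real Set MeasureTheory
open scoped Interval

section InvSq

variable {a b : ℝ}

theorem intervalIntegrable_inv_sq_of_pos (ha : 0 < a) (hab : a ≤ b) :
    IntervalIntegrable (fun t : ℝ => (t ^ 2)⁻¹) volume a b :=
  ContinuousOn.intervalIntegrable <| ContinuousOn.inv₀ (continuousOn_pow 2) fun _ ht =>
    pow_ne_zero 2 (ha.trans_le (uIcc_of_le hab ▸ ht).1).ne'

theorem integral_inv_sq_of_pos (ha : 0 < a) (hab : a ≤ b) :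
    ∫ t in a..b, (t ^ 2)⁻¹ = a⁻¹ - b⁻¹ := by
  have hpos : ∀ t ∈ uIcc a b, 0 < t := fun t ht => ha.trans_le (uIcc_of_le hab ▸ ht).1
  rw [integral_eq_sub_of_hasDerivAt (f := fun t => -t⁻¹)
    (fun t ht => by simpa using (hasDerivAt_inv (hpos t ht).ne').fun_neg)
    (intervalIntegrable_inv_sq_of_pos ha hab)]
  ring

end InvSq

theorem abs_integral_sinc_le_two_div {a b : ℝ} (ha : 0 < a) (hab : a ≤ b) :
    |∫ t in a..b, sinc t| ≤ 2 / a := by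
  have hpos : ∀ t ∈ uIcc a b, 0 < t := fun t ht => ha.trans_le (uIcc_of_le hab ▸ ht).1
  have hibp : ∫ t in a..b, t⁻¹ * sin t
      = b⁻¹ * -cos b - a⁻¹ * -cos a - ∫ t in a..b, -(t ^ 2)⁻¹ * -cos t :=
    integral_mul_deriv_eq_deriv_mul (fun t ht => hasDerivAt_inv (hpos t ht).ne')
      (fun t _ => by simpa using (hasDerivAt_cos t).neg)
      (intervalIntegrable_inv_sq_of_pos ha hab).neg (continuous_sin.intervalIntegrable _ _)
  have hboundary : ∀ t, 0 < t → |t⁻¹ * -cos t| ≤ t⁻¹ := fun t ht => by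
    rw [abs_mul, abs_neg, abs_inv, abs_of_pos ht]
    exact mul_le_of_le_one_right (by positivity) (abs_cos_le_one t)
  have hrem : |∫ t in a..b, -(t ^ 2)⁻¹ * -cos t| ≤ a⁻¹ - b⁻¹ := by
    rw [← Real.norm_eq_abs, ← integral_inv_sq_of_pos ha hab]
    refine norm_integral_le_of_norm_le hab (ae_of_all _ fun t _ => ?_)
      (intervalIntegrable_inv_sq_of_pos ha hab)
    rw [neg_mul_neg, norm_mul, norm_inv, norm_pow, Real.norm_eq_abs, sq_abs]
    exact mul_le_of_le_one_right (by positivity) (abs_cos_le_one t)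
  rw [integral_congr fun t ht => by rw [sinc_of_ne_zero (hpos t ht).ne', div_eq_inv_mul], hibp]
  calc _ ≤ |b⁻¹ * -cos b| + |a⁻¹ * -cos a| + |∫ t in a..b, -(t ^ 2)⁻¹ * -cos t| :=
        (abs_sub _ _).trans (add_le_add_left (abs_sub _ _) _)
    _ ≤ b⁻¹ + a⁻¹ + (a⁻¹ - b⁻¹) := by
        gcongr
        exacts [hboundary b (ha.trans_le hab), hboundary a ha]
    _ = 2 / a := by ring

theorem abs_integral_sinc_le_three {T : ℝ} (hT : 0 ≤ T) :
    |∫ t in (0 : ℝ)..T, sinc t| ≤ 3 := by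
  have hsmall : ∀ c, 0 ≤ c → c ≤ 1 → |∫ t in (0 : ℝ)..c, sinc t| ≤ 1 := fun c hc0 hc1 => by
    have h := norm_integral_le_of_norm_le_const (a := 0) (b := c) (C := 1)
      fun t _ => (Real.norm_eq_abs (sinc t)).trans_le (abs_sinc_le_one t)
    rw [Real.norm_eq_abs, sub_zero, abs_of_nonneg hc0, one_mul] at h
    exact h.trans hc1
  rcases le_total T 1 with hT1 | hT1
  · linarith [hsmall T hT hT1]
  · rw [← integral_add_adjacent_intervals (continuous_sinc.intervalIntegrable 0 1)
      (continuous_sinc.intervalIntegrable 1 T)]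
    have := abs_integral_sinc_le_two_div one_pos hT1
    have := hsmall 1 zero_le_one le_rfl
    linarith [abs_add_le (∫ t in (0 : ℝ)..1, sinc t) (∫ t in (1 : ℝ)..T, sinc t)]

theorem abs_sub_le_mul_of_abs_deriv_le {f : ℝ → ℝ} {a b C : ℝ} (hab : a ≤ b)
    (hf : ContinuousOn f (Icc a b)) (hd : DifferentiableOn ℝ f (Ioo a b))
    (hC : ∀ t ∈ Ioo a b, |deriv f t| ≤ C) : |f b - f a| ≤ C * (b - a) := by
  rcases hab.eq_or_lt with rfl | hlt
  · simp
  · obtain ⟨c, hc, hslope⟩ := exists_deriv_eq_slope f hlt hf hd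
    rw [eq_div_iff (sub_pos.2 hlt).ne'] at hslope
    rw [← hslope, abs_mul, abs_of_pos (sub_pos.2 hlt)]
    exact mul_le_mul_of_nonneg_right (hC c hc) (sub_pos.2 hlt).le

theorem abs_inv_sub_inv_le {a b m : ℝ} (hm : 0 < m) (ha : m ≤ |a|) (hb : m ≤ |b|) :
    |a⁻¹ - b⁻¹| ≤ |a - b| / m ^ 2 := by
  have ha0 : a ≠ 0 := abs_pos.1 (hm.trans_le ha)
  have hb0 : b ≠ 0 := abs_pos.1 (hm.trans_le hb)
  rw [inv_sub_inv ha0 hb0, abs_div, abs_mul, abs_sub_comm]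
  exact div_le_div_of_nonneg_left (abs_nonneg _) (by positivity) (by nlinarith)

theorem abs_integral_sin_mul_div_mul_le {φ : ℝ → ℝ} {x S L : ℝ} (hx : 0 < x) (hS : 0 ≤ S)
    (hφ : ContinuousOn φ (Icc 0 S)) (hL : ∀ s ∈ Icc 0 S, |φ s - φ 0| ≤ L * s) :
    |∫ s in (0 : ℝ)..S, sin (x * s) / s * φ s| ≤ 3 * |φ 0| + L * S := by
  set r : ℝ → ℝ := fun s => sin (x * s) / s * (φ s - φ 0)
  have hIoc : Ι 0 S = Ioc 0 S := uIoc_of_le hS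
  have hr_bound : ∀ s ∈ Ι 0 S, ‖r s‖ ≤ L := fun s hs => by
    rw [hIoc] at hs
    rw [Real.norm_eq_abs, abs_mul, abs_div, abs_of_pos hs.1, div_mul_eq_mul_div,
      div_le_iff₀ hs.1]
    simpa using mul_le_mul (abs_sin_le_one (x * s)) (hL s ⟨hs.1.le, hs.2⟩) (abs_nonneg _)
      zero_le_one
  have hr_int : IntervalIntegrable r volume 0 S := by
    refine (intervalIntegrable_const (c := L)).mono_fun' ?_
      (ae_restrict_of_forall_mem measurableSet_uIoc hr_bound)
    have hφm : AEStronglyMeasurable φ (volume.restrict (Ι 0 S)) :=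
      (hφ.aestronglyMeasurable measurableSet_Icc).mono_measure
        (Measure.restrict_mono (hIoc ▸ Ioc_subset_Icc_self) le_rfl)
    exact (by fun_prop : Measurable fun s => sin (x * s) / s).aestronglyMeasurable.mul
      (hφm.sub aestronglyMeasurable_const)
  have hsplit : ∀ s ∈ Ι 0 S, sin (x * s) / s * φ s = φ 0 * (x * sinc (x * s)) + r s :=
    fun s hs => by
      rw [hIoc] at hs
      rw [sinc_of_ne_zero (mul_pos hx hs.1).ne']
      field_simp
      ring
  have hsubst : ∫ s in (0 : ℝ)..S, x * sinc (x * s) = ∫ t in (0 : ℝ)..(x * S), sinc t := by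
    rw [intervalIntegral.integral_const_mul, mul_integral_comp_mul_left, mul_zero]
  have hsinc : IntervalIntegrable (fun s => φ 0 * (x * sinc (x * s))) volume 0 S :=
    Continuous.intervalIntegrable (by fun_prop [continuous_sinc]) _ _
  rw [integral_congr_ae (ae_of_all _ hsplit), integral_add hsinc hr_int,
    intervalIntegral.integral_const_mul, hsubst]
  have hr_le : |∫ s in (0 : ℝ)..S, r s| ≤ L * S := by
    simpa [abs_of_nonneg hS] using norm_integral_le_of_norm_le_const hr_bound
  calc _ ≤ |φ 0| * |∫ t in (0 : ℝ)..(x * S), sinc t| + L * S :=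
        (abs_add_le _ _).trans (by rw [abs_mul]; exact add_le_add le_rfl hr_le)
    _ ≤ 3 * |φ 0| + L * S := by
        rw [mul_comm 3]
        gcongr
        exact abs_integral_sinc_le_three (by positivity)

/-- The key oscillatory-integral estimate: if `g` is `C¹` on `[0,S]` with
`−B ≤ g ≤ −B/2` and `|g'| ≤ B`, then `|∫₀^S sin(xs)/(s·g(s)) ds|` is bounded by a
constant depending only on `B` and `S`, uniformly over `x > 0`. -/
theorem stmt_11 (B S : ℝ) (hB : 0 < B) (hS : 0 < S) :
    ∃ C : ℝ, ∀ g : ℝ → ℝ, ContDiffOn ℝ 1 g (Set.Icc 0 S) →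
      (∀ s ∈ Set.Icc (0:ℝ) S, -B ≤ g s ∧ g s ≤ -(B/2)) →
      (∀ s ∈ Set.Icc (0:ℝ) S, |deriv g s| ≤ B) →
      ∀ x : ℝ, 0 < x →
        |∫ s in (0:ℝ)..S, Real.sin (x * s) / (s * g s)| ≤ C := by
  refine ⟨6 / B + 4 / B * S, fun g hg hrange hder x hx => ?_⟩
  have hg_abs : ∀ s ∈ Icc 0 S, B / 2 ≤ |g s| := fun s hs => by
    rw [abs_of_neg (by linarith [(hrange s hs).2])]
    linarith [(hrange s hs).2]
  have hzero : (0 : ℝ) ∈ Icc 0 S := left_mem_Icc.2 hS.le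
  have hinv_lip : ∀ s ∈ Icc 0 S, |(g s)⁻¹ - (g 0)⁻¹| ≤ 4 / B * s := fun s hs => by
    have hsub : Icc 0 s ⊆ Icc 0 S := Icc_subset_Icc_right hs.2
    have hmvt := abs_sub_le_mul_of_abs_deriv_le hs.1 (hg.continuousOn.mono hsub)
      ((hg.differentiableOn one_ne_zero).mono (Ioo_subset_Icc_self.trans hsub))
      fun t ht => hder t (hsub (Ioo_subset_Icc_self ht))
    calc |(g s)⁻¹ - (g 0)⁻¹| ≤ |g s - g 0| / (B / 2) ^ 2 :=
          abs_inv_sub_inv_le (by positivity) (hg_abs s hs) (hg_abs 0 hzero)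
      _ ≤ B * (s - 0) / (B / 2) ^ 2 := div_le_div_of_nonneg_right hmvt (by positivity)
      _ = 4 / B * s := by field_simp; ring
  have hinv_cont : ContinuousOn (fun s => (g s)⁻¹) (Icc 0 S) :=
    hg.continuousOn.inv₀ fun s hs => abs_pos.1 ((half_pos hB).trans_le (hg_abs s hs))
  have hinv_zero : |(g 0)⁻¹| ≤ 2 / B := by
    rw [abs_inv, ← inv_div]
    exact inv_anti₀ (half_pos hB) (hg_abs 0 hzero)
  calc |∫ s in (0 : ℝ)..S, sin (x * s) / (s * g s)|
      = |∫ s in (0 : ℝ)..S, sin (x * s) / s * (g s)⁻¹| := by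
        simp_rw [div_mul_eq_div_div, div_eq_mul_inv (sin _ / _)]
    _ ≤ 3 * |(g 0)⁻¹| + 4 / B * S :=
        abs_integral_sin_mul_div_mul_le hx hS.le hinv_cont hinv_lip
    _ ≤ 3 * (2 / B) + 4 / B * S := by gcongr
    _ = 6 / B + 4 / B * S := by ring
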